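/- arXiv:1508.05531 — 2 statements merged into one kernel-verified Lean document; each statement's English description precedes it below -/
import Mathlib

section
/- Let a > 0 and u₀ ∈ C^∞(ℝ³, ℝ). Suppose there is δ > 0 such that for every partial-derivative operator ∂^α of order |α| ≤ 2, the series Σ_{k=0}^∞ (δ^k/k!) ∂^α Δ^k u₀ converges uniformly on every compact subset of ℝ³ (where Δ is the Laplacian on ℝ³). Then the function u(x,t) = Σ_{k=0}^∞ ((a²t)^k/k!) Δ^k u₀(x) is well defined for (x,t) ∈ ℝ³ × [0, δ/a²), satisfies the heat equation ∂u/∂t = a² Δu on ℝ³ × (0, δ/a²), and satisfies the initial condition u(x,0) = u₀(x) for all x ∈ ℝ³. -/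
open Filter

/-- Partial derivative in the `i`-th coordinate direction. -/
noncomputable def pd (i : Fin 3) (f : (Fin 3 → ℝ) → ℝ) : (Fin 3 → ℝ) → ℝ :=
  fun x => deriv (fun s => f (Function.update x i s)) (x i)

/-- The Laplacian on `ℝ³`. -/
noncomputable def lap (f : (Fin 3 → ℝ) → ℝ) : (Fin 3 → ℝ) → ℝ :=
  fun x => ∑ i : Fin 3, pd i (pd i f) x

lemma update_eq_affine (x : Fin 3 → ℝ) (i : Fin 3) (s : ℝ) :
    Function.update x i s = x + (s - x i) • (Pi.single i 1 : Fin 3 → ℝ) := by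
  funext j
  rcases eq_or_ne j i with h | h
  · subst h; simp [Function.update_self]
  · simp [Function.update_of_ne h, Pi.single_apply, h]

lemma slice_hasDerivAt {f : (Fin 3 → ℝ) → ℝ} {L : (Fin 3 → ℝ) →L[ℝ] ℝ} {x : Fin 3 → ℝ}
    (i : Fin 3) (hf : HasFDerivAt f L x) :
    HasDerivAt (fun s => f (Function.update x i s)) (L (Pi.single i 1)) (x i) := by
  have hg : HasDerivAt (fun s : ℝ => x + (s - x i) • (Pi.single i 1 : Fin 3 → ℝ))
      (Pi.single i 1) (x i) := by
    simpa using (((hasDerivAt_id (x i)).sub_const (x i)).smul_const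
      (Pi.single i 1 : Fin 3 → ℝ)).const_add x
  have hfx : HasFDerivAt f L (x + ((x i) - x i) • (Pi.single i 1 : Fin 3 → ℝ)) := by
    simpa using hf
  have h2 := hfx.comp_hasDerivAt (x i) hg
  simp only [Function.comp_def] at h2
  simp only [← update_eq_affine] at h2
  exact h2

lemma pd_apply_of_hasFDerivAt {f : (Fin 3 → ℝ) → ℝ} {L : (Fin 3 → ℝ) →L[ℝ] ℝ} {x : Fin 3 → ℝ}
    (i : Fin 3) (hf : HasFDerivAt f L x) :
    pd i f x = L (Pi.single i 1) :=
  (slice_hasDerivAt i hf).deriv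

lemma pd_eq_fderiv_apply {f : (Fin 3 → ℝ) → ℝ} (i : Fin 3) (hf : ContDiff ℝ (⊤ : ℕ∞) f) :
    pd i f = fun x => fderiv ℝ f x (Pi.single i 1) :=
  funext fun x => pd_apply_of_hasFDerivAt i ((hf.differentiable (by simp) x).hasFDerivAt)

lemma contDiff_pd {f : (Fin 3 → ℝ) → ℝ} (i : Fin 3) (hf : ContDiff ℝ (⊤ : ℕ∞) f) :
    ContDiff ℝ (⊤ : ℕ∞) (pd i f) := by
  rw [pd_eq_fderiv_apply i hf]
  exact (ContinuousLinearMap.apply ℝ ℝ (Pi.single i 1)).contDiff.comp (hf.fderiv_right (m := (⊤ : ℕ∞)) (by simp))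

lemma contDiff_lap {f : (Fin 3 → ℝ) → ℝ} (hf : ContDiff ℝ (⊤ : ℕ∞) f) : ContDiff ℝ (⊤ : ℕ∞) (lap f) := by
  unfold lap
  exact ContDiff.sum fun i _ => contDiff_pd i (contDiff_pd i hf)

lemma contDiff_lap_iter (u₀ : (Fin 3 → ℝ) → ℝ) (hu₀ : ContDiff ℝ (⊤ : ℕ∞) u₀) (k : ℕ) :
    ContDiff ℝ (⊤ : ℕ∞) (lap^[k] u₀) := by
  induction k with
  | zero => exact hu₀
  | succ n ih => rw [Function.iterate_succ_apply']; exact contDiff_lap ih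

lemma pdpd_eq {f : (Fin 3 → ℝ) → ℝ} (i : Fin 3) (hf : ContDiff ℝ (⊤ : ℕ∞) f) (x : Fin 3 → ℝ) :
    pd i (pd i f) x = fderiv ℝ (fderiv ℝ f) x (Pi.single i 1) (Pi.single i 1) := by
  rw [pd_eq_fderiv_apply i hf]
  have hD : HasFDerivAt (fderiv ℝ f) (fderiv ℝ (fderiv ℝ f) x) x :=
    (((hf.fderiv_right (m := (⊤ : ℕ∞)) (by simp)).differentiable (by simp)) x).hasFDerivAt
  have h := pd_apply_of_hasFDerivAt i
    (((ContinuousLinearMap.apply ℝ ℝ ((Pi.single i 1 : Fin 3 → ℝ))).hasFDerivAt).comp x hD)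
  simpa [Function.comp_def] using h

lemma lap_eq_sum {f : (Fin 3 → ℝ) → ℝ} (hf : ContDiff ℝ (⊤ : ℕ∞) f) (x : Fin 3 → ℝ) :
    lap f x = ∑ i : Fin 3, fderiv ℝ (fderiv ℝ f) x (Pi.single i 1) (Pi.single i 1) := by
  unfold lap
  exact Finset.sum_congr rfl fun i _ => pdpd_eq i hf x

lemma norm_single_one (i : Fin 3) : ‖(Pi.single i 1 : Fin 3 → ℝ)‖ = 1 := by
  rw [Pi.norm_single]; exact norm_one

lemma norm_fderiv_le_iteratedFDeriv_one (f : (Fin 3 → ℝ) → ℝ) (x : Fin 3 → ℝ) :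
    ‖fderiv ℝ f x‖ ≤ ‖iteratedFDeriv ℝ 1 f x‖ := by
  refine ContinuousLinearMap.opNorm_le_bound _ (norm_nonneg _) fun v => ?_
  have h : fderiv ℝ f x v = iteratedFDeriv ℝ 1 f x (fun _ => v) :=
    (iteratedFDeriv_one_apply (fun _ => v)).symm
  rw [h]
  refine le_trans ((iteratedFDeriv ℝ 1 f x).le_opNorm _) ?_
  simp

lemma norm_fderiv2_le_iteratedFDeriv_two (f : (Fin 3 → ℝ) → ℝ) (x : Fin 3 → ℝ) :
    ‖fderiv ℝ (fderiv ℝ f) x‖ ≤ ‖iteratedFDeriv ℝ 2 f x‖ := by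
  refine ContinuousLinearMap.opNorm_le_bound _ (norm_nonneg _) fun v => ?_
  refine ContinuousLinearMap.opNorm_le_bound _ (by positivity) fun w => ?_
  have h : fderiv ℝ (fderiv ℝ f) x v w = iteratedFDeriv ℝ 2 f x ![v, w] := by
    rw [iteratedFDeriv_two_apply]; simp
  rw [h]
  refine le_trans ((iteratedFDeriv ℝ 2 f x).le_opNorm _) ?_
  rw [Fin.prod_univ_two]
  simp [mul_assoc]

set_option maxHeartbeats 2000000 in
/-- The series `Σ ((a²t)^k/k!) Δ^k u₀(x)` is well defined for `0 ≤ t < δ/a²`,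
solves the heat equation `∂u/∂t = a² Δu` for `0 < t < δ/a²` and attains the initial
condition `u₀` at `t = 0`, provided all partial derivatives up to order two of the
`δ`-series converge uniformly on compact sets. -/
theorem heat_equation_power_series_solution
    (a : ℝ) (ha : 0 < a) (u₀ : (Fin 3 → ℝ) → ℝ) (hu₀ : ContDiff ℝ (⊤ : ℕ∞) u₀)
    (δ : ℝ) (hδ : 0 < δ)
    (hconv : ∀ j : ℕ, j ≤ 2 → ∀ K : Set (Fin 3 → ℝ), IsCompact K →
      ∃ g : (Fin 3 → ℝ) → ContinuousMultilinearMap ℝ (fun _ : Fin j => (Fin 3 → ℝ)) ℝ,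
        TendstoUniformlyOn
          (fun (n : ℕ) (x : Fin 3 → ℝ) =>
            ∑ k ∈ Finset.range n, (δ ^ k / k.factorial) • iteratedFDeriv ℝ j (lap^[k] u₀) x)
          g atTop K)
    (u : (Fin 3 → ℝ) → ℝ → ℝ)
    (hu : u = fun x t => ∑' k : ℕ, ((a ^ 2 * t) ^ k / k.factorial) * (lap^[k] u₀ x)) :
    (∀ (x : Fin 3 → ℝ) (t : ℝ), 0 ≤ t → t < δ / a ^ 2 →
      Summable fun k : ℕ => ((a ^ 2 * t) ^ k / k.factorial) * (lap^[k] u₀ x)) ∧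
    (∀ (x : Fin 3 → ℝ) (t : ℝ), 0 < t → t < δ / a ^ 2 →
      HasDerivAt (fun s => u x s) (a ^ 2 * lap (fun y => u y t) x) t) ∧
    (∀ x : Fin 3 → ℝ, u x 0 = u₀ x) := by
  have hgsmooth : ∀ k : ℕ, ContDiff ℝ (⊤ : ℕ∞) (lap^[k] u₀) := contDiff_lap_iter u₀ hu₀
  -- uniform bounds on compact sets
  have hbound : ∀ j : ℕ, j ≤ 2 → ∀ K : Set (Fin 3 → ℝ), IsCompact K →
      ∃ M : ℝ, 0 ≤ M ∧ ∀ k : ℕ, ∀ y ∈ K,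
        (δ ^ k / k.factorial) * ‖iteratedFDeriv ℝ j (lap^[k] u₀) y‖ ≤ M := by
    intro j hj K hK
    obtain ⟨g, hg⟩ := hconv j hj K hK
    have hc := hg.uniformCauchySeqOn
    rw [Metric.uniformCauchySeqOn_iff] at hc
    obtain ⟨N, hN⟩ := hc 1 one_pos
    have hcont : ∀ k : ℕ, ∃ C : ℝ, ∀ y ∈ K, ‖iteratedFDeriv ℝ j (lap^[k] u₀) y‖ ≤ C := fun k =>
      hK.exists_bound_of_continuousOn
        (((hgsmooth k).continuous_iteratedFDeriv (by exact_mod_cast le_top)).continuousOn)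
    choose C hC using hcont
    refine ⟨1 + ∑ k ∈ Finset.range N, (δ ^ k / k.factorial) * |C k|, by positivity, ?_⟩
    intro k y hy
    by_cases hkN : k < N
    · have h1 : (δ ^ k / k.factorial) * ‖iteratedFDeriv ℝ j (lap^[k] u₀) y‖
          ≤ (δ ^ k / k.factorial) * |C k| := by
        gcongr
        exact (hC k y hy).trans (le_abs_self _)
      refine h1.trans ?_
      have h2 : (δ ^ k / (k.factorial : ℝ)) * |C k|
          ≤ ∑ m ∈ Finset.range N, (δ ^ m / m.factorial) * |C m| :=
        Finset.single_le_sum (f := fun m => (δ ^ m / (m.factorial : ℝ)) * |C m|)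
          (fun m _ => by positivity) (Finset.mem_range.2 hkN)
      linarith
    · push_neg at hkN
      have hdist := hN (k + 1) (by omega) k hkN y hy
      rw [dist_eq_norm, Finset.sum_range_succ] at hdist
      simp only [add_sub_cancel_left] at hdist
      have hns := norm_smul (δ ^ k / (k.factorial:ℝ)) (iteratedFDeriv ℝ j (lap^[k] u₀) y)
      rw [Real.norm_eq_abs, abs_of_nonneg (by positivity)] at hns
      rw [← hns]
      have h3 : (0:ℝ) ≤ ∑ m ∈ Finset.range N, (δ ^ m / m.factorial) * |C m| := by positivity
      linarith
  -- point bound at a single point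
  have hb0 : ∀ x : Fin 3 → ℝ, ∃ M : ℝ, 0 ≤ M ∧ ∀ k : ℕ,
      (δ ^ k / k.factorial) * |lap^[k] u₀ x| ≤ M := by
    intro x
    obtain ⟨M, hM0, hM⟩ := hbound 0 (by norm_num) {x} isCompact_singleton
    refine ⟨M, hM0, fun k => ?_⟩
    have := hM k x rfl
    rwa [norm_iteratedFDeriv_zero, Real.norm_eq_abs] at this
  have hc_lt : ∀ t : ℝ, t < δ / a ^ 2 → a ^ 2 * t < δ := by
    intro t ht
    have ha2 : (0:ℝ) < a ^ 2 := by positivity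
    rw [lt_div_iff₀ ha2] at ht
    linarith
  -- Claim 1 : summability
  have claim1 : ∀ (x : Fin 3 → ℝ) (t : ℝ), 0 ≤ t → t < δ / a ^ 2 →
      Summable fun k : ℕ => ((a ^ 2 * t) ^ k / k.factorial) * (lap^[k] u₀ x) := by
    intro x t ht ht'
    obtain ⟨M, hM0, hM⟩ := hb0 x
    set r : ℝ := a ^ 2 * t / δ with hrdef
    have hr0 : 0 ≤ r := by positivity
    have hr1 : r < 1 := (div_lt_one hδ).2 (hc_lt t ht')
    have hcr : ∀ k : ℕ, (a ^ 2 * t) ^ k = r ^ k * δ ^ k := by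
      intro k; rw [← mul_pow]; congr 1
      rw [hrdef, div_mul_cancel₀ _ hδ.ne']
    refine Summable.of_norm_bounded
      ((summable_geometric_of_lt_one hr0 hr1).mul_left M) fun k => ?_
    have hnn : (0:ℝ) ≤ (a ^ 2 * t) ^ k / k.factorial := by positivity
    rw [Real.norm_eq_abs, abs_mul, abs_of_nonneg hnn, hcr k]
    have := hM k
    calc r ^ k * δ ^ k / k.factorial * |lap^[k] u₀ x|
        = r ^ k * ((δ ^ k / k.factorial) * |lap^[k] u₀ x|) := by ring
      _ ≤ r ^ k * M := by gcongr
      _ = M * r ^ k := mul_comm _ _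
  refine ⟨claim1, ?_, ?_⟩
  · -- Claim 2
    intro x t ht ht'
    simp only [hu]
    set c : ℝ := a ^ 2 * t with hcdef
    have hc0 : 0 < c := mul_pos (pow_pos ha 2) ht
    have hcδ : c < δ := hc_lt t ht'
    set r : ℝ := c / δ with hrdef
    have hr0 : 0 ≤ r := by positivity
    have hr1 : r < 1 := (div_lt_one hδ).2 hcδ
    have hcr : ∀ k : ℕ, c ^ k = r ^ k * δ ^ k := by
      intro k; rw [← mul_pow]; congr 1
      rw [hrdef, div_mul_cancel₀ _ hδ.ne']
    obtain ⟨M₁, hM₁0, hM₁⟩ := hbound 1 one_le_two (Metric.closedBall x 1) (isCompact_closedBall x 1)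
    obtain ⟨M₂, hM₂0, hM₂⟩ := hbound 2 le_rfl (Metric.closedBall x 1) (isCompact_closedBall x 1)
    set B := Metric.ball x 1 with hBdef
    have hBopen : IsOpen B := Metric.isOpen_ball
    have hBconn : IsPreconnected B := (convex_ball x 1).isPreconnected
    have hxB : x ∈ B := Metric.mem_ball_self one_pos
    have hBK : B ⊆ Metric.closedBall x 1 := Metric.ball_subset_closedBall
    have hS1 : Summable fun k : ℕ => M₁ * r ^ k :=
      (summable_geometric_of_lt_one hr0 hr1).mul_left M₁
    have hS2 : Summable fun k : ℕ => M₂ * r ^ k :=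
      (summable_geometric_of_lt_one hr0 hr1).mul_left M₂
    have hsum0 : Summable fun k : ℕ => (c ^ k / (k.factorial:ℝ)) * lap^[k] u₀ x := by
      have := claim1 x t ht.le ht'
      rwa [← hcdef] at this
    -- norm bounds for the first and second derivative series
    have hnorm1 : ∀ (k : ℕ) (y : Fin 3 → ℝ), y ∈ Metric.closedBall x 1 →
        ‖(c ^ k / (k.factorial:ℝ)) • fderiv ℝ (lap^[k] u₀) y‖ ≤ M₁ * r ^ k := by
      intro k y hy
      have hns := norm_smul (c ^ k / (k.factorial:ℝ)) (fderiv ℝ (lap^[k] u₀) y)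
      rw [Real.norm_eq_abs, abs_of_nonneg (by positivity)] at hns
      rw [hns]
      have h2 := norm_fderiv_le_iteratedFDeriv_one (lap^[k] u₀) y
      have h3 := hM₁ k y hy
      calc c ^ k / (k.factorial:ℝ) * ‖fderiv ℝ (lap^[k] u₀) y‖
          ≤ c ^ k / (k.factorial:ℝ) * ‖iteratedFDeriv ℝ 1 (lap^[k] u₀) y‖ := by gcongr
        _ = r ^ k * ((δ ^ k / (k.factorial:ℝ)) * ‖iteratedFDeriv ℝ 1 (lap^[k] u₀) y‖) := by
            rw [hcr k]; ring
        _ ≤ r ^ k * M₁ := by gcongr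
        _ = M₁ * r ^ k := mul_comm _ _
    have hnorm2 : ∀ (k : ℕ) (y : Fin 3 → ℝ), y ∈ Metric.closedBall x 1 →
        ‖(c ^ k / (k.factorial:ℝ)) • fderiv ℝ (fderiv ℝ (lap^[k] u₀)) y‖ ≤ M₂ * r ^ k := by
      intro k y hy
      have hns := @norm_smul _ _ _ _ _ NormedSpace.toNormSMulClass (c ^ k / (k.factorial:ℝ)) (fderiv ℝ (fderiv ℝ (lap^[k] u₀)) y)
      rw [Real.norm_eq_abs, abs_of_nonneg (by positivity)] at hns
      rw [hns]
      have h2 := norm_fderiv2_le_iteratedFDeriv_two (lap^[k] u₀) y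
      have h3 := hM₂ k y hy
      calc c ^ k / (k.factorial:ℝ) * ‖fderiv ℝ (fderiv ℝ (lap^[k] u₀)) y‖
          ≤ c ^ k / (k.factorial:ℝ) * ‖iteratedFDeriv ℝ 2 (lap^[k] u₀) y‖ := by gcongr
        _ = r ^ k * ((δ ^ k / (k.factorial:ℝ)) * ‖iteratedFDeriv ℝ 2 (lap^[k] u₀) y‖) := by
            rw [hcr k]; ring
        _ ≤ r ^ k * M₂ := by gcongr
        _ = M₂ * r ^ k := mul_comm _ _
    -- first termwise differentiation in space
    have hF : ∀ y ∈ B, HasFDerivAt (fun z => ∑' k : ℕ, (c ^ k / (k.factorial:ℝ)) * lap^[k] u₀ z)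
        (∑' k : ℕ, (c ^ k / (k.factorial:ℝ)) • fderiv ℝ (lap^[k] u₀) y) y := by
      intro y hy
      exact hasFDerivAt_tsum_of_isPreconnected hS1 hBopen hBconn
        (fun k z _ => (((hgsmooth k).differentiable (by simp) z).hasFDerivAt).const_mul _)
        (fun k z hz => hnorm1 k z (hBK hz)) hxB hsum0 hy
    have hsumf'x : Summable fun k : ℕ => (c ^ k / (k.factorial:ℝ)) • fderiv ℝ (lap^[k] u₀) x :=
      Summable.of_norm_bounded hS1 fun k =>
        hnorm1 k x (Metric.mem_closedBall_self zero_le_one)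
    -- second termwise differentiation in space
    have hG : HasFDerivAt (fun z => ∑' k : ℕ, (c ^ k / (k.factorial:ℝ)) • fderiv ℝ (lap^[k] u₀) z)
        (∑' k : ℕ, (c ^ k / (k.factorial:ℝ)) • fderiv ℝ (fderiv ℝ (lap^[k] u₀)) x) x := by
      refine hasFDerivAt_tsum_of_isPreconnected hS2 hBopen hBconn
        (fun k z _ => ?_) (fun k z hz => hnorm2 k z (hBK hz)) hxB hsumf'x hxB
      exact ((((hgsmooth k).fderiv_right (m := (⊤ : ℕ∞)) (by simp)).differentiable (by simp) z).hasFDerivAt).const_smul (c ^ k / (k.factorial:ℝ))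
    have hTsum : Summable fun k : ℕ => (c ^ k / (k.factorial:ℝ)) • fderiv ℝ (fderiv ℝ (lap^[k] u₀)) x :=
      Summable.of_norm_bounded (E := (Fin 3 → ℝ) →L[ℝ] (Fin 3 → ℝ) →L[ℝ] ℝ) hS2 fun k =>
        hnorm2 k x (Metric.mem_closedBall_self zero_le_one)
    have hkey : ∀ (k : ℕ) (i : Fin 3),
        |fderiv ℝ (fderiv ℝ (lap^[k] u₀)) x (Pi.single i 1) (Pi.single i 1)|
          ≤ ‖iteratedFDeriv ℝ 2 (lap^[k] u₀) x‖ := by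
      intro k i
      have h1 := (fderiv ℝ (fderiv ℝ (lap^[k] u₀)) x (Pi.single i 1)).le_opNorm
        (Pi.single i 1 : Fin 3 → ℝ)
      have h2 := (fderiv ℝ (fderiv ℝ (lap^[k] u₀)) x).le_opNorm (Pi.single i 1 : Fin 3 → ℝ)
      have h3 := norm_fderiv2_le_iteratedFDeriv_two (lap^[k] u₀) x
      rw [norm_single_one, mul_one] at h1 h2
      rw [← Real.norm_eq_abs]
      exact h1.trans (h2.trans h3)
    have hscal : ∀ i : Fin 3, Summable fun k : ℕ =>
        (c ^ k / (k.factorial:ℝ)) * fderiv ℝ (fderiv ℝ (lap^[k] u₀)) x (Pi.single i 1) (Pi.single i 1) := by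
      intro i
      refine Summable.of_norm_bounded hS2 fun k => ?_
      rw [Real.norm_eq_abs, abs_mul, abs_of_nonneg (by positivity : (0:ℝ) ≤ c ^ k / (k.factorial:ℝ))]
      calc c ^ k / (k.factorial:ℝ) * |fderiv ℝ (fderiv ℝ (lap^[k] u₀)) x (Pi.single i 1) (Pi.single i 1)|
          ≤ c ^ k / (k.factorial:ℝ) * ‖iteratedFDeriv ℝ 2 (lap^[k] u₀) x‖ := by
            gcongr; exact hkey k i
        _ = r ^ k * ((δ ^ k / (k.factorial:ℝ)) * ‖iteratedFDeriv ℝ 2 (lap^[k] u₀) x‖) := by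
            rw [hcr k]; ring
        _ ≤ r ^ k * M₂ := by gcongr; exact hM₂ k x (Metric.mem_closedBall_self zero_le_one)
        _ = M₂ * r ^ k := mul_comm _ _
    -- second partial derivatives of the sum
    have hpd2 : ∀ i : Fin 3,
        pd i (pd i (fun z => ∑' k : ℕ, (c ^ k / (k.factorial:ℝ)) * lap^[k] u₀ z)) x
          = ∑' k : ℕ, (c ^ k / (k.factorial:ℝ)) *
              fderiv ℝ (fderiv ℝ (lap^[k] u₀)) x (Pi.single i 1) (Pi.single i 1) := by
      intro i
      have hmem : ∀ s : ℝ, s ∈ Metric.ball (x i) 1 → Function.update x i s ∈ B := by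
        intro s hs
        rw [hBdef, Metric.mem_ball, dist_eq_norm]
        have hupd : Function.update x i s - x = Pi.single i (s - x i) := by
          funext j
          rcases eq_or_ne j i with h | h
          · subst h; simp [Function.update_self]
          · simp [Function.update_of_ne h, Pi.single_apply, h]
        rw [hupd, Pi.norm_single, Real.norm_eq_abs]
        rw [Metric.mem_ball, Real.dist_eq] at hs
        exact hs
      have hslice : (fun s => (pd i (fun z => ∑' k : ℕ, (c ^ k / (k.factorial:ℝ)) * lap^[k] u₀ z))
            (Function.update x i s))
          =ᶠ[nhds (x i)] (fun s =>
            (∑' k : ℕ, (c ^ k / (k.factorial:ℝ)) • fderiv ℝ (lap^[k] u₀) (Function.update x i s))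
              (Pi.single i 1)) := by
        filter_upwards [Metric.ball_mem_nhds (x i) one_pos] with s hs
        exact pd_apply_of_hasFDerivAt i (hF _ (hmem s hs))
      have hGi := ((ContinuousLinearMap.apply ℝ ℝ ((Pi.single i 1 : Fin 3 → ℝ))).hasFDerivAt).comp x hG
      simp only [Function.comp_def, ContinuousLinearMap.apply_apply] at hGi
      have hstep : pd i (pd i (fun z => ∑' k : ℕ, (c ^ k / (k.factorial:ℝ)) * lap^[k] u₀ z)) x
          = ((ContinuousLinearMap.apply ℝ ℝ ((Pi.single i 1 : Fin 3 → ℝ))).comp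
              (∑' k : ℕ, (c ^ k / (k.factorial:ℝ)) • fderiv ℝ (fderiv ℝ (lap^[k] u₀)) x))
              (Pi.single i 1) :=
        (hslice.deriv_eq).trans ((slice_hasDerivAt i hGi).deriv)
      rw [hstep]
      have e1 : (∑' k : ℕ, (c ^ k / (k.factorial:ℝ)) • fderiv ℝ (fderiv ℝ (lap^[k] u₀)) x)
            (Pi.single i 1)
          = ∑' k : ℕ, ((c ^ k / (k.factorial:ℝ)) • fderiv ℝ (fderiv ℝ (lap^[k] u₀)) x)
              (Pi.single i 1) :=
        (ContinuousLinearMap.apply ℝ ((Fin 3 → ℝ) →L[ℝ] ℝ) (Pi.single i 1)).map_tsum hTsum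
      have hTsum2 : Summable fun k : ℕ =>
          ((c ^ k / (k.factorial:ℝ)) • fderiv ℝ (fderiv ℝ (lap^[k] u₀)) x) (Pi.single i 1) := by
        refine Summable.of_norm_bounded hS2 fun k => ?_
        refine le_trans ?_ (hnorm2 k x (Metric.mem_closedBall_self zero_le_one))
        have := ((c ^ k / (k.factorial:ℝ)) • fderiv ℝ (fderiv ℝ (lap^[k] u₀)) x).le_opNorm
          (Pi.single i 1 : Fin 3 → ℝ)
        rwa [norm_single_one, mul_one] at this
      have e2 : (∑' k : ℕ, ((c ^ k / (k.factorial:ℝ)) • fderiv ℝ (fderiv ℝ (lap^[k] u₀)) x)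
            (Pi.single i 1)) (Pi.single i 1)
          = ∑' k : ℕ, ((c ^ k / (k.factorial:ℝ)) • fderiv ℝ (fderiv ℝ (lap^[k] u₀)) x)
              (Pi.single i 1) (Pi.single i 1) :=
        (ContinuousLinearMap.apply ℝ ℝ (Pi.single i 1)).map_tsum hTsum2
      simp only [ContinuousLinearMap.comp_apply, ContinuousLinearMap.apply_apply]
      rw [e1, e2]
      exact tsum_congr fun k => by
        simp [ContinuousLinearMap.smul_apply, smul_eq_mul]
    -- the Laplacian of the sum
    have hlapF : lap (fun z => ∑' k : ℕ, (c ^ k / (k.factorial:ℝ)) * lap^[k] u₀ z) x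
        = ∑' k : ℕ, (c ^ k / (k.factorial:ℝ)) * lap^[k+1] u₀ x := by
      have h1 : lap (fun z => ∑' k : ℕ, (c ^ k / (k.factorial:ℝ)) * lap^[k] u₀ z) x
          = ∑ i : Fin 3, ∑' k : ℕ, (c ^ k / (k.factorial:ℝ)) *
              fderiv ℝ (fderiv ℝ (lap^[k] u₀)) x (Pi.single i 1) (Pi.single i 1) := by
        rw [lap]
        exact Finset.sum_congr rfl fun i _ => hpd2 i
      rw [h1, ← Summable.tsum_finsetSum (fun i _ => hscal i)]
      refine tsum_congr fun k => ?_
      rw [← Finset.mul_sum, ← lap_eq_sum (hgsmooth k) x, Function.iterate_succ_apply' lap k u₀]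
    -- the time derivative
    set T : ℝ := (t + δ / a ^ 2) / 2 with hTdef
    have htT : t < T := by rw [hTdef]; linarith
    have hTδ : T < δ / a ^ 2 := by rw [hTdef]; linarith
    have hT0 : 0 < T := ht.trans htT
    set ρ : ℝ := a ^ 2 * T / δ with hρdef
    have hρ0 : 0 < ρ := by positivity
    have hρ1 : ρ < 1 := (div_lt_one hδ).2 (hc_lt T hTδ)
    have hcrT : ∀ m : ℕ, (a ^ 2 * T) ^ m = ρ ^ m * δ ^ m := by
      intro m; rw [← mul_pow]; congr 1
      rw [hρdef, div_mul_cancel₀ _ hδ.ne']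
    obtain ⟨M₀, hM₀0, hM₀⟩ := hb0 x
    have hbk : ∀ k : ℕ, |lap^[k] u₀ x| ≤ M₀ * k.factorial / δ ^ k := by
      intro k
      have h := hM₀ k
      rw [div_mul_eq_mul_div, div_le_iff₀ (by positivity : (0:ℝ) < (k.factorial:ℝ))] at h
      rw [le_div_iff₀ (by positivity : (0:ℝ) < δ ^ k)]
      linarith [mul_comm (δ ^ k) |lap^[k] u₀ x|]
    have hderiv : ∀ (k : ℕ) (s : ℝ),
        HasDerivAt (fun s' => (a ^ 2 * s') ^ k / (k.factorial:ℝ) * lap^[k] u₀ x)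
          (((k:ℝ) * (a ^ 2 * s) ^ (k - 1) * a ^ 2) / (k.factorial:ℝ) * lap^[k] u₀ x) s := by
      intro k s
      have h1 : HasDerivAt (fun s' : ℝ => a ^ 2 * s') (a ^ 2) s := by
        simpa using (hasDerivAt_id s).const_mul (a ^ 2)
      exact ((h1.pow k).div_const _).mul_const _
    have husum : Summable fun k : ℕ => (a ^ 2 * M₀ / δ) * ((k:ℝ) * ρ ^ (k - 1)) := by
      have h2 : Summable (fun k : ℕ => (k:ℝ) * ρ ^ k) := by
        have := summable_pow_mul_geometric_of_norm_lt_one 1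
          (r := ρ) (by rwa [Real.norm_eq_abs, abs_of_nonneg hρ0.le])
        simpa using this
      have h1 : Summable (fun k : ℕ => ((k:ℝ) + 1) * ρ ^ k) := by
        have := h2.add (summable_geometric_of_lt_one hρ0.le hρ1)
        refine this.congr fun n => ?_
        ring
      have h3 : Summable (fun k : ℕ => (k:ℝ) * ρ ^ (k - 1)) := by
        apply (summable_nat_add_iff 1).1
        refine h1.congr fun n => ?_
        simp only [Nat.add_sub_cancel]
        push_cast
        ring
      exact h3.mul_left _
    have hbnd : ∀ (k : ℕ) (s : ℝ), s ∈ Set.Ioo (0:ℝ) T →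
        ‖((k:ℝ) * (a ^ 2 * s) ^ (k - 1) * a ^ 2) / (k.factorial:ℝ) * lap^[k] u₀ x‖
          ≤ (a ^ 2 * M₀ / δ) * ((k:ℝ) * ρ ^ (k - 1)) := by
      intro k s hs
      rcases k with _ | m
      · simp
      · obtain ⟨hs0, hsT⟩ := hs
        have h0 : (0:ℝ) ≤ a ^ 2 * s := by positivity
        have hsle : a ^ 2 * s ≤ a ^ 2 * T := by nlinarith
        have hp : (a ^ 2 * s) ^ m ≤ (a ^ 2 * T) ^ m := pow_le_pow_left₀ h0 hsle m
        simp only [Nat.add_sub_cancel]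
        rw [Real.norm_eq_abs, abs_mul,
          abs_of_nonneg (by positivity : (0:ℝ) ≤ ((m+1:ℕ):ℝ) * (a ^ 2 * s) ^ m * a ^ 2 / ((m+1).factorial:ℝ))]
        have hfac : (((m+1).factorial:ℕ):ℝ) ≠ 0 := by
          exact_mod_cast (Nat.factorial_ne_zero (m+1))
        calc ((m+1:ℕ):ℝ) * (a ^ 2 * s) ^ m * a ^ 2 / ((m+1).factorial:ℝ) * |lap^[m+1] u₀ x|
            ≤ ((m+1:ℕ):ℝ) * (a ^ 2 * T) ^ m * a ^ 2 / ((m+1).factorial:ℝ)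
                * (M₀ * ((m+1).factorial:ℝ) / δ ^ (m+1)) := by
              gcongr
              exact hbk (m+1)
          _ = (a ^ 2 * M₀ / δ) * (((m+1:ℕ):ℝ) * ρ ^ m) := by
              rw [hcrT m]
              field_simp
              ring
    have hmemI : t ∈ Set.Ioo (0:ℝ) T := ⟨ht, htT⟩
    have hd := hasDerivAt_tsum_of_isPreconnected husum isOpen_Ioo isPreconnected_Ioo
      (fun k s _ => hderiv k s) hbnd hmemI (by rwa [hcdef] at hsum0) hmemI
    have hsum' : Summable fun k : ℕ =>
        ((k:ℝ) * (a ^ 2 * t) ^ (k - 1) * a ^ 2) / (k.factorial:ℝ) * lap^[k] u₀ x :=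
      Summable.of_norm_bounded husum fun k => hbnd k t hmemI
    have e : (∑' k : ℕ, ((k:ℝ) * (a ^ 2 * t) ^ (k - 1) * a ^ 2) / (k.factorial:ℝ) * lap^[k] u₀ x)
        = ∑' k : ℕ, a ^ 2 * ((c ^ k / (k.factorial:ℝ)) * lap^[k+1] u₀ x) := by
      rw [hsum'.tsum_eq_zero_add]
      simp only [Nat.cast_zero, zero_mul, Nat.factorial_zero, Nat.cast_one, zero_div, zero_add]
      refine tsum_congr fun n => ?_
      simp only [Nat.add_sub_cancel]
      rw [hcdef, Nat.factorial_succ]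
      have hfn : ((n.factorial:ℕ):ℝ) ≠ 0 := by exact_mod_cast n.factorial_ne_zero
      push_cast
      field_simp
    have efinal : a ^ 2 * lap (fun y => ∑' k : ℕ, (c ^ k / (k.factorial:ℝ)) * lap^[k] u₀ y) x
        = ∑' k : ℕ, ((k:ℝ) * (a ^ 2 * t) ^ (k - 1) * a ^ 2) / (k.factorial:ℝ) * lap^[k] u₀ x := by
      rw [hlapF, ← tsum_mul_left, e]
    rw [efinal]
    exact hd
  · -- Claim 3 : initial condition
    intro x
    simp only [hu]
    rw [tsum_eq_single 0 ?side]
    · simp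
    case side =>
      intro k hk
      simp [zero_pow hk, mul_zero]
end

section
/- Let a > 0 and g ∈ C^∞(ℝ, ℝ). Suppose there is δ > 0 such that for each j ∈ {0,1,2} the series Σ_{n=0}^∞ (δⁿ/n!)·g^{(2n+j)} converges uniformly on every compact subset of ℝ, where g^{(m)} denotes the m-th derivative of g. Then the function V(x,t) = Σ_{n=0}^∞ ((a²t)ⁿ/n!)·g^{(2n)}(x) is well defined for (x,t) ∈ ℝ × [0, δ/a²), satisfies the one-dimensional heat equation ∂V/∂t = a²·∂²V/∂x² on ℝ × (0, δ/a²), and satisfies V(x,0) = g(x) for all x ∈ ℝ. -/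
open Filter

/-- auxiliary bound: each term of the `t`-series is dominated by `C * (a²t/δ)ⁿ`. -/
lemma heat_term_bound {a t δ C : ℝ} (hδ : 0 < δ) (ht : 0 ≤ t) (n : ℕ) (d : ℝ)
    (hd : |δ ^ n / n.factorial * d| ≤ C) :
    ‖(a ^ 2 * t) ^ n / n.factorial * d‖ ≤ C * (a ^ 2 * t / δ) ^ n := by
  set r := a ^ 2 * t / δ with hr
  have hr0 : 0 ≤ r := by positivity
  have h1 : a ^ 2 * t = r * δ := by rw [hr, div_mul_cancel₀ _ hδ.ne']
  rw [Real.norm_eq_abs, h1, mul_pow,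
    show r ^ n * δ ^ n / (n.factorial : ℝ) * d = r ^ n * (δ ^ n / n.factorial * d) by ring,
    abs_mul, abs_pow, abs_of_nonneg hr0, mul_comm]
  exact mul_le_mul_of_nonneg_right hd (pow_nonneg hr0 n)

/-- term-wise `t`-derivative of the heat series. -/
noncomputable def heatAux (a : ℝ) (c : ℕ → ℝ) : ℕ → ℝ → ℝ
  | 0, _ => 0
  | (n + 1), s => a ^ 2 * ((a ^ 2 * s) ^ n / n.factorial * c (n + 1))

/-- summable majorant for `heatAux`. -/
noncomputable def heatBound (b r : ℝ) : ℕ → ℝ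
  | 0 => 0
  | (n + 1) => b * r ^ n

lemma heatBound_summable (b : ℝ) {r : ℝ} (h0 : 0 ≤ r) (h1 : r < 1) :
    Summable (heatBound b r) := by
  refine (summable_nat_add_iff 1).mp ?_
  simpa [heatBound] using (summable_geometric_of_lt_one h0 h1).mul_left b

set_option maxHeartbeats 1000000 in
/-- The series `V(x,t) = Σ ((a²t)ⁿ/n!) g^{(2n)}(x)` is well defined for `0 ≤ t < δ/a²`,
solves the one-dimensional heat equation `∂V/∂t = a² ∂²V/∂x²` for `0 < t < δ/a²` and
satisfies `V(x,0) = g(x)`, provided the `δ`-series of the derivatives `g^{(2n+j)}`,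
`j = 0,1,2`, converge uniformly on compact sets. -/
theorem one_dimensional_heat_power_series_solution
    (a : ℝ) (ha : 0 < a) (g : ℝ → ℝ) (hg : ContDiff ℝ (⊤ : ℕ∞) g)
    (δ : ℝ) (hδ : 0 < δ)
    (hconv : ∀ j : ℕ, j ≤ 2 → ∀ K : Set ℝ, IsCompact K →
      ∃ h : ℝ → ℝ,
        TendstoUniformlyOn
          (fun (N : ℕ) (x : ℝ) =>
            ∑ n ∈ Finset.range N, δ ^ n / n.factorial * iteratedDeriv (2 * n + j) g x)
          h atTop K)
    (V : ℝ → ℝ → ℝ)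
    (hV : V = fun x t => ∑' n : ℕ, (a ^ 2 * t) ^ n / n.factorial * iteratedDeriv (2 * n) g x) :
    (∀ (x t : ℝ), 0 ≤ t → t < δ / a ^ 2 →
      Summable fun n : ℕ => (a ^ 2 * t) ^ n / n.factorial * iteratedDeriv (2 * n) g x) ∧
    (∀ (x t : ℝ), 0 < t → t < δ / a ^ 2 →
      HasDerivAt (fun s => V x s) (a ^ 2 * deriv (deriv (fun y => V y t)) x) t) ∧
    (∀ x : ℝ, V x 0 = g x) := by
  have ha2 : (0:ℝ) < a ^ 2 := by positivity
  -- uniform bound on compacts for every j ≤ 2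
  have hbound : ∀ j : ℕ, j ≤ 2 → ∀ K : Set ℝ, IsCompact K → ∃ C : ℝ, ∀ n : ℕ, ∀ x ∈ K,
      |δ ^ n / n.factorial * iteratedDeriv (2 * n + j) g x| ≤ C := by
    intro j hj K hK
    obtain ⟨h, hh⟩ := hconv j hj K hK
    rw [Metric.tendstoUniformlyOn_iff] at hh
    obtain ⟨N, hN⟩ := eventually_atTop.1 (hh (1/2) (by norm_num))
    have htail : ∀ n : ℕ, N ≤ n → ∀ x ∈ K,
        |δ ^ n / n.factorial * iteratedDeriv (2 * n + j) g x| ≤ 1 := by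
      intro n hn x hx
      have h1 := hN n hn x hx
      have h2 := hN (n + 1) (by omega) x hx
      rw [Real.dist_eq] at h1 h2
      rw [Finset.sum_range_succ] at h2
      have key : δ ^ n / n.factorial * iteratedDeriv (2 * n + j) g x
          = (h x - ∑ m ∈ Finset.range n, δ ^ m / m.factorial * iteratedDeriv (2 * m + j) g x)
            - (h x - ((∑ m ∈ Finset.range n, δ ^ m / m.factorial * iteratedDeriv (2 * m + j) g x)
              + δ ^ n / n.factorial * iteratedDeriv (2 * n + j) g x)) := by ring
      rw [key]
      have h3 := abs_sub
        (h x - ∑ m ∈ Finset.range n, δ ^ m / m.factorial * iteratedDeriv (2 * m + j) g x)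
        (h x - ((∑ m ∈ Finset.range n, δ ^ m / m.factorial * iteratedDeriv (2 * m + j) g x)
          + δ ^ n / n.factorial * iteratedDeriv (2 * n + j) g x))
      linarith
    -- head is bounded since the terms are continuous on the compact `K`
    have hcont : ContinuousOn
        (fun x => ∑ m ∈ Finset.range N, |δ ^ m / m.factorial * iteratedDeriv (2 * m + j) g x|) K := by
      apply continuousOn_finset_sum
      intro m _
      exact (continuous_const.mul
        (hg.differentiable_iteratedDeriv (2 * m + j)
          (WithTop.coe_lt_coe.2 (ENat.natCast_lt_top _))).continuous).abs.continuousOn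
    obtain ⟨C₀, hC₀⟩ := hK.exists_bound_of_continuousOn hcont
    refine ⟨max C₀ 1, fun n x hx => ?_⟩
    rcases le_or_gt N n with hn | hn
    · exact (htail n hn x hx).trans (le_max_right _ _)
    · have h1 : |δ ^ n / n.factorial * iteratedDeriv (2 * n + j) g x| ≤
          ∑ m ∈ Finset.range N, |δ ^ m / m.factorial * iteratedDeriv (2 * m + j) g x| :=
        Finset.single_le_sum
          (f := fun m => |δ ^ m / (m.factorial : ℝ) * iteratedDeriv (2 * m + j) g x|)
          (fun m _ => abs_nonneg _) (Finset.mem_range.2 hn)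
      have h2 := hC₀ x hx
      rw [Real.norm_eq_abs] at h2
      have h3 := (le_abs_self
        (∑ m ∈ Finset.range N, |δ ^ m / m.factorial * iteratedDeriv (2 * m + j) g x|)).trans h2
      exact (h1.trans h3).trans (le_max_left _ _)
  -- summability for every j ≤ 2
  have hsum : ∀ j : ℕ, j ≤ 2 → ∀ x t : ℝ, 0 ≤ t → t < δ / a ^ 2 →
      Summable fun n : ℕ => (a ^ 2 * t) ^ n / n.factorial * iteratedDeriv (2 * n + j) g x := by
    intro j hj x t ht0 htT
    obtain ⟨C, hC⟩ := hbound j hj {x} isCompact_singleton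
    have hr0 : 0 ≤ a ^ 2 * t / δ := by positivity
    have hr1 : a ^ 2 * t / δ < 1 := by
      rw [div_lt_one hδ]
      have := (lt_div_iff₀ ha2).1 htT
      nlinarith
    refine Summable.of_norm_bounded (g := fun n => C * (a ^ 2 * t / δ) ^ n)
      ((summable_geometric_of_lt_one hr0 hr1).mul_left C) (fun n => ?_)
    exact heat_term_bound hδ ht0 n _ (hC n x rfl)
  -- derivative of iterated derivatives
  have hder : ∀ (m : ℕ) (z : ℝ), HasDerivAt (iteratedDeriv m g) (iteratedDeriv (m + 1) g z) z := by
    intro m z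
    rw [iteratedDeriv_succ]
    exact ((hg.differentiable_iteratedDeriv m (WithTop.coe_lt_coe.2 (ENat.natCast_lt_top _))) z).hasDerivAt
  refine ⟨?_, ?_, ?_⟩
  · intro x t ht0 htT
    simpa using hsum 0 (by norm_num) x t ht0 htT
  · intro x t ht0 htT
    -- spatial derivatives
    have hW : ∀ j : ℕ, j ≤ 1 → ∀ y : ℝ,
        HasDerivAt (fun z => ∑' n : ℕ, (a ^ 2 * t) ^ n / n.factorial * iteratedDeriv (2 * n + j) g z)
          (∑' n : ℕ, (a ^ 2 * t) ^ n / n.factorial * iteratedDeriv (2 * n + (j + 1)) g y) y := by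
      intro j hj y
      obtain ⟨C, hC⟩ := hbound (j + 1) (by omega) (Set.Icc (y - 1) (y + 1)) isCompact_Icc
      have hr0 : 0 ≤ a ^ 2 * t / δ := by positivity
      have hr1 : a ^ 2 * t / δ < 1 := by
        rw [div_lt_one hδ]
        have := (lt_div_iff₀ ha2).1 htT
        nlinarith
      have hymem : y ∈ Set.Ioo (y - 1) (y + 1) := by constructor <;> linarith
      refine hasDerivAt_tsum_of_isPreconnected
        (g := fun (n : ℕ) (z : ℝ) => (a ^ 2 * t) ^ n / n.factorial * iteratedDeriv (2 * n + j) g z)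
        (g' := fun (n : ℕ) (z : ℝ) => (a ^ 2 * t) ^ n / n.factorial * iteratedDeriv (2 * n + (j + 1)) g z)
        ((summable_geometric_of_lt_one hr0 hr1).mul_left C) isOpen_Ioo isPreconnected_Ioo
        (fun n z _ => ?_) (fun n z hz => ?_) hymem (hsum j (by omega) y t ht0.le htT) hymem
      · have h1 := (hder (2 * n + j) z).const_mul ((a ^ 2 * t) ^ n / (n.factorial : ℝ))
        simp only [show 2 * n + (j + 1) = 2 * n + j + 1 from by ring]
        exact h1
      · have hz' : z ∈ Set.Icc (y - 1) (y + 1) := Set.Ioo_subset_Icc_self hz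
        exact heat_term_bound hδ ht0.le n _ (hC n z hz')
    have hVfun : (fun y => V y t)
        = fun z => ∑' n : ℕ, (a ^ 2 * t) ^ n / n.factorial * iteratedDeriv (2 * n + 0) g z := by
      funext z; rw [hV]; simp
    have hD1 : deriv (fun y => V y t)
        = fun z => ∑' n : ℕ, (a ^ 2 * t) ^ n / n.factorial * iteratedDeriv (2 * n + 1) g z := by
      funext z
      rw [hVfun]
      exact (hW 0 (by norm_num) z).deriv
    have hD2 : deriv (deriv (fun y => V y t)) x
        = ∑' n : ℕ, (a ^ 2 * t) ^ n / n.factorial * iteratedDeriv (2 * n + 2) g x := by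
      rw [hD1]
      exact (hW 1 le_rfl x).deriv
    -- time derivative
    set c : ℕ → ℝ := fun n => iteratedDeriv (2 * n) g x with hc
    obtain ⟨C₂, hC₂⟩ := hbound 2 (by norm_num) {x} isCompact_singleton
    have hC₂0 : 0 ≤ C₂ := (abs_nonneg _).trans (hC₂ 0 x rfl)
    set t₁ : ℝ := (t + δ / a ^ 2) / 2 with ht₁def
    have ht₁a : t < t₁ := by rw [ht₁def]; linarith
    have ht₁b : t₁ < δ / a ^ 2 := by rw [ht₁def]; linarith
    have ht₁0 : 0 < t₁ := ht0.trans ht₁a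
    set r₁ : ℝ := a ^ 2 * t₁ / δ with hr₁def
    have hr₁0 : 0 ≤ r₁ := by positivity
    have hr₁1 : r₁ < 1 := by
      rw [hr₁def, div_lt_one hδ]
      have := (lt_div_iff₀ ha2).1 ht₁b
      nlinarith
    have hu : Summable (heatBound (a ^ 2 * C₂) r₁) := heatBound_summable _ hr₁0 hr₁1
    have htmem : t ∈ Set.Ioo (0:ℝ) t₁ := ⟨ht0, ht₁a⟩
    have hderiv : ∀ (n : ℕ) (s : ℝ), s ∈ Set.Ioo (0:ℝ) t₁ →
        HasDerivAt (fun s => (a ^ 2 * s) ^ n / n.factorial * c n) (heatAux a c n s) s := by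
      intro n s _
      match n with
      | 0 => simpa [heatAux] using hasDerivAt_const s (c 0)
      | (n + 1) =>
        have hb : HasDerivAt (fun s : ℝ => a ^ 2 * s) (a ^ 2) s := by
          simpa using (hasDerivAt_id s).const_mul (a ^ 2)
        have hp := ((hb.pow (n + 1)).div_const ((n + 1).factorial)).mul_const (c (n + 1))
        refine hp.congr_deriv ?_
        have hn0 : ((n:ℝ) + 1) ≠ 0 := by positivity
        have hf0 : ((n.factorial : ℝ)) ≠ 0 := by exact_mod_cast n.factorial_ne_zero
        simp only [heatAux, Nat.add_sub_cancel, Nat.factorial_succ]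
        push_cast
        field_simp
    have hbnd : ∀ (n : ℕ) (s : ℝ), s ∈ Set.Ioo (0:ℝ) t₁ →
        ‖heatAux a c n s‖ ≤ heatBound (a ^ 2 * C₂) r₁ n := by
      intro n s hs
      match n with
      | 0 => simp [heatAux, heatBound]
      | (n + 1) =>
        have h1 : |δ ^ n / n.factorial * c (n + 1)| ≤ C₂ := by
          have h := hC₂ n x rfl
          simp only [hc]
          rw [show 2 * (n + 1) = 2 * n + 2 from by ring]
          exact h
        have h2 : ‖(a ^ 2 * s) ^ n / n.factorial * c (n + 1)‖ ≤ C₂ * (a ^ 2 * s / δ) ^ n :=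
          heat_term_bound (a := a) (t := s) (δ := δ) hδ hs.1.le n _ h1
        have h3 : C₂ * (a ^ 2 * s / δ) ^ n ≤ C₂ * r₁ ^ n := by
          have hs1 : (0:ℝ) ≤ s := hs.1.le
          have hs2 : s ≤ t₁ := hs.2.le
          have h4 : a ^ 2 * s / δ ≤ r₁ := by rw [hr₁def]; gcongr
          exact mul_le_mul_of_nonneg_left (pow_le_pow_left₀ (by positivity) h4 n) hC₂0
        calc ‖heatAux a c (n + 1) s‖
            = a ^ 2 * ‖(a ^ 2 * s) ^ n / n.factorial * c (n + 1)‖ := by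
              rw [show heatAux a c (n + 1) s
                  = a ^ 2 * ((a ^ 2 * s) ^ n / n.factorial * c (n + 1)) from rfl,
                norm_mul, Real.norm_eq_abs (a ^ 2), abs_of_nonneg ha2.le]
          _ ≤ a ^ 2 * (C₂ * r₁ ^ n) :=
              mul_le_mul_of_nonneg_left (h2.trans h3) ha2.le
          _ = heatBound (a ^ 2 * C₂) r₁ (n + 1) := by
              rw [show heatBound (a ^ 2 * C₂) r₁ (n + 1) = a ^ 2 * C₂ * r₁ ^ n from rfl]; ring
    have hsum0 : Summable fun n : ℕ => (a ^ 2 * t) ^ n / n.factorial * c n := by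
      have := hsum 0 (by norm_num) x t ht0.le htT
      simpa [hc] using this
    have hHD : HasDerivAt (fun s => ∑' n : ℕ, (a ^ 2 * s) ^ n / n.factorial * c n)
        (∑' n : ℕ, heatAux a c n t) t :=
      hasDerivAt_tsum_of_isPreconnected hu isOpen_Ioo isPreconnected_Ioo
        hderiv hbnd htmem hsum0 htmem
    have hsumG : Summable fun n : ℕ => heatAux a c n t :=
      hu.of_norm_bounded (fun n => hbnd n t htmem)
    have hstep : ∑' n : ℕ, heatAux a c n t
        = a ^ 2 * ∑' n : ℕ, (a ^ 2 * t) ^ n / n.factorial * iteratedDeriv (2 * n + 2) g x := by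
      rw [Summable.tsum_eq_zero_add hsumG]
      have h0 : heatAux a c 0 t = 0 := rfl
      rw [h0, zero_add]
      rw [show (fun n : ℕ => heatAux a c (n + 1) t)
          = fun n : ℕ => a ^ 2 * ((a ^ 2 * t) ^ n / n.factorial * iteratedDeriv (2 * n + 2) g x) by
        funext n
        rw [show heatAux a c (n + 1) t = a ^ 2 * ((a ^ 2 * t) ^ n / n.factorial * c (n + 1)) from rfl]
        simp only [hc]
        rw [show 2 * (n + 1) = 2 * n + 2 from by ring]]
      exact tsum_mul_left
    have hVx : (fun s => V x s) = fun s => ∑' n : ℕ, (a ^ 2 * s) ^ n / n.factorial * c n := by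
      funext s; rw [hV]
    rw [hVx, hD2, ← hstep]
    exact hHD
  · intro x
    rw [hV]
    have h0 : ∑' n : ℕ, (a ^ 2 * (0:ℝ)) ^ n / n.factorial * iteratedDeriv (2 * n) g x
        = (a ^ 2 * (0:ℝ)) ^ 0 / (Nat.factorial 0) * iteratedDeriv (2 * 0) g x := by
      apply tsum_eq_single
      intro n hn
      simp [zero_pow hn]
    simpa using h0
end
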